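/- Let 0 < 𝔭_f^- < 𝔭_f^+ < κ. Then there exist constants 0 < C₁ ≤ C₂, depending only on κ, γ_i, γ_c, 𝔭_f^-, 𝔭_f^+, and a threshold ε̄ > 0, such that for every 0 < ε < ε̄ and every p ∈ [𝔭_f^-, 𝔭_f^+] one has C₁ ≤ −𝒯_ε'(p) ≤ C₂. -/

import Mathlib

open Set Filter MeasureTheory Topology

/-- The singular pressure law `𝒫_ε(τ) = κ τ^{-γᵢ} + ε (τ-1)^{-γ_c}`. -/
noncomputable def Pe (κ γi γc ε τ : ℝ) : ℝ := κ * τ ^ (-γi) + ε * (τ - 1) ^ (-γc)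

/-! For small `ε`, `𝒯_ε` maps a neighbourhood `[q₁, q₂]` of `[𝔭_f⁻, 𝔭_f⁺]` into a fixed compact
interval `[τ₁, τ₂] ⊂ (1, ∞)`: `τ₁` is where the nonsingular part `κ τ^{-γᵢ}` of the pressure equals
`q₂ < κ`, and `τ₂` is where it equals `q₁ / 2`, with `ε̄` so small that the singular part at `τ₂`
adds at most another `q₁ / 2`. Since `-𝒫_ε'` decreases in `τ` and increases in `ε`, it lies
between `-𝒫_0'(τ₂)` and `-𝒫_ε̄'(τ₁)` on `[τ₁, τ₂]`, and `-𝒯_ε' = 1 / (-𝒫_ε' ∘ 𝒯_ε)`. -/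

noncomputable def negDerivPe (κ γi γc ε τ : ℝ) : ℝ :=
  κ * γi * τ ^ (-γi - 1) + ε * γc * (τ - 1) ^ (-γc - 1)

/-- The inverse `𝒯_0` of the nonsingular law `τ ↦ κ τ^{-γᵢ}`. -/
noncomputable def invPeZero (κ γi p : ℝ) : ℝ := (κ / p) ^ γi⁻¹

lemma lipschitzOnWith_of_rightInverse {f g : ℝ → ℝ} {D t : Set ℝ} {m : ℝ} (hm : 0 < m)
    (hD : Convex ℝ D) (hf : ContinuousOn f D) (hf' : DifferentiableOn ℝ f (interior D))
    (hslope : ∀ x ∈ interior D, deriv f x ≤ -m) (hgD : MapsTo g t D)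
    (hfg : ∀ y ∈ t, f (g y) = y) :
    LipschitzOnWith (Real.toNNReal m⁻¹) g t := by
  have hsep : ∀ y ∈ t, ∀ z ∈ t, g y ≤ g z → m * |g y - g z| ≤ |y - z| := by
    intro y hy z hz hyz
    have h := hD.image_sub_le_mul_sub_of_deriv_le hf hf' hslope _ (hgD hy) _ (hgD hz) hyz
    rw [hfg y hy, hfg z hz] at h
    rw [abs_sub_comm, abs_of_nonneg (sub_nonneg.2 hyz)]
    linarith [le_abs_self (y - z)]
  refine LipschitzOnWith.of_dist_le' fun y hy z hz => ?_
  rw [Real.dist_eq, Real.dist_eq, ← div_eq_inv_mul, le_div_iff₀' hm]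
  rcases le_total (g y) (g z) with h | h
  · exact hsep y hy z hz h
  · rw [abs_sub_comm, abs_sub_comm y]
    exact hsep z hz y hy h

section PressureLaw

variable {κ γi γc : ℝ}

lemma hasDerivAt_Pe (ε : ℝ) {τ : ℝ} (hτ : 1 < τ) :
    HasDerivAt (Pe κ γi γc ε) (-negDerivPe κ γi γc ε τ) τ := by
  have hi := (Real.hasDerivAt_rpow_const (p := -γi) (Or.inl (by linarith : τ ≠ 0))).const_mul κ
  have hc := ((Real.hasDerivAt_rpow_const (p := -γc) (Or.inl (by linarith : τ - 1 ≠ 0))).comp τ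
    ((hasDerivAt_id τ).sub_const 1)).const_mul ε
  rw [show -negDerivPe κ γi γc ε τ
      = κ * (-γi * τ ^ (-γi - 1)) + ε * (-γc * (τ - 1) ^ (-γc - 1) * 1) by
    unfold negDerivPe; ring]
  exact hi.add hc

lemma negDerivPe_pos {ε τ : ℝ} (hκ : 0 < κ) (hγi : 0 < γi) (hγc : 0 ≤ γc) (hε : 0 ≤ ε)
    (hτ : 1 < τ) : 0 < negDerivPe κ γi γc ε τ := by
  have hi : 0 < τ ^ (-γi - 1) := Real.rpow_pos_of_pos (by linarith) _
  have hc : 0 ≤ (τ - 1) ^ (-γc - 1) := Real.rpow_nonneg (by linarith) _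
  unfold negDerivPe
  positivity

lemma negDerivPe_antitoneOn {ε : ℝ} (hκ : 0 ≤ κ) (hγi : 0 ≤ γi) (hγc : 0 ≤ γc) (hε : 0 ≤ ε) :
    AntitoneOn (negDerivPe κ γi γc ε) (Ioi 1) := by
  intro σ hσ τ hτ hστ
  have hσ' : (1 : ℝ) < σ := hσ
  have hi : τ ^ (-γi - 1) ≤ σ ^ (-γi - 1) :=
    Real.rpow_le_rpow_of_nonpos (by linarith) hστ (by linarith)
  have hc : (τ - 1) ^ (-γc - 1) ≤ (σ - 1) ^ (-γc - 1) :=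
    Real.rpow_le_rpow_of_nonpos (by linarith) (by linarith) (by linarith)
  unfold negDerivPe
  exact add_le_add (mul_le_mul_of_nonneg_left hi (by positivity))
    (mul_le_mul_of_nonneg_left hc (by positivity))

lemma negDerivPe_monotone_eps {τ : ℝ} (hγc : 0 ≤ γc) (hτ : 1 ≤ τ) :
    Monotone fun ε => negDerivPe κ γi γc ε τ := by
  intro ε ε' hεε'
  have hc : 0 ≤ (τ - 1) ^ (-γc - 1) := Real.rpow_nonneg (by linarith) _
  dsimp only [negDerivPe]
  exact add_le_add le_rfl (mul_le_mul_of_nonneg_right (mul_le_mul_of_nonneg_right hεε' hγc) hc)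

lemma negDerivPe_mem_Icc {ε ε₀ τ₁ τ₂ τ : ℝ} (hκ : 0 ≤ κ) (hγi : 0 ≤ γi) (hγc : 0 ≤ γc)
    (hε : 0 ≤ ε) (hεε₀ : ε ≤ ε₀) (hτ₁ : 1 < τ₁) (hτ : τ ∈ Icc τ₁ τ₂) :
    negDerivPe κ γi γc ε τ ∈ Icc (negDerivPe κ γi γc 0 τ₂) (negDerivPe κ γi γc ε₀ τ₁) := by
  have h1 : (1 : ℝ) < τ := hτ₁.trans_le hτ.1
  constructor
  · calc negDerivPe κ γi γc 0 τ₂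
        ≤ negDerivPe κ γi γc 0 τ :=
          negDerivPe_antitoneOn hκ hγi hγc le_rfl h1 (h1.trans_le hτ.2) hτ.2
      _ ≤ negDerivPe κ γi γc ε τ := negDerivPe_monotone_eps hγc h1.le hε
  · calc negDerivPe κ γi γc ε τ
        ≤ negDerivPe κ γi γc ε₀ τ := negDerivPe_monotone_eps hγc h1.le hεε₀
      _ ≤ negDerivPe κ γi γc ε₀ τ₁ :=
          negDerivPe_antitoneOn hκ hγi hγc (hε.trans hεε₀) hτ₁ h1 hτ.1

lemma Pe_strictAntiOn {ε : ℝ} (hκ : 0 < κ) (hγi : 0 < γi) (hγc : 0 ≤ γc) (hε : 0 ≤ ε) :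
    StrictAntiOn (Pe κ γi γc ε) (Ioi 1) := by
  refine strictAntiOn_of_deriv_neg (convex_Ioi 1)
    (fun τ hτ => (hasDerivAt_Pe ε hτ).continuousAt.continuousWithinAt) fun τ hτ => ?_
  rw [interior_Ioi] at hτ
  rw [(hasDerivAt_Pe ε hτ).deriv, neg_neg_iff_pos]
  exact negDerivPe_pos hκ hγi hγc hε hτ

lemma Pe_monotone_eps {τ : ℝ} (hτ : 1 ≤ τ) : Monotone fun ε => Pe κ γi γc ε τ := by
  intro ε ε' hεε'
  have hc : 0 ≤ (τ - 1) ^ (-γc) := Real.rpow_nonneg (by linarith) _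
  dsimp only [Pe]
  exact add_le_add le_rfl (mul_le_mul_of_nonneg_right hεε' hc)

lemma mem_Icc_of_Pe_le {ε ε₀ τ₁ τ₂ τ : ℝ} (hκ : 0 < κ) (hγi : 0 < γi) (hγc : 0 ≤ γc)
    (hε : 0 ≤ ε) (hεε₀ : ε ≤ ε₀) (hτ₁ : 1 < τ₁) (hτ₂ : 1 < τ₂) (hτ : 1 < τ)
    (hle₂ : Pe κ γi γc ε₀ τ₂ ≤ Pe κ γi γc ε τ) (hle₁ : Pe κ γi γc ε τ ≤ Pe κ γi γc 0 τ₁) :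
    τ ∈ Icc τ₁ τ₂ := by
  have hanti := Pe_strictAntiOn hκ hγi hγc hε
  constructor
  · exact (hanti.le_iff_ge hτ hτ₁).1 (hle₁.trans (Pe_monotone_eps hτ₁.le hε))
  · exact (hanti.le_iff_ge hτ₂ hτ).1 ((Pe_monotone_eps hτ₂.le hεε₀).trans hle₂)

lemma Pe_zero_invPeZero {p : ℝ} (hκ : 0 < κ) (hγi : γi ≠ 0) (hp : 0 < p) :
    Pe κ γi γc 0 (invPeZero κ γi p) = p := by
  have hbase : 0 ≤ κ / p := by positivity
  rw [Pe, invPeZero, zero_mul, add_zero, Real.rpow_neg (Real.rpow_nonneg hbase _),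
    Real.rpow_inv_rpow hbase hγi]
  field_simp

lemma one_lt_invPeZero {p : ℝ} (hγi : 0 < γi) (hp : 0 < p) (hpκ : p < κ) :
    1 < invPeZero κ γi p :=
  Real.one_lt_rpow ((one_lt_div hp).2 hpκ) (inv_pos.2 hγi)

lemma Pe_invPeZero_eq_two_mul {p : ℝ} (hκ : 0 < κ) (hγi : γi ≠ 0) (hp : 0 < p)
    (hτ : 1 < invPeZero κ γi p) :
    Pe κ γi γc (p * (invPeZero κ γi p - 1) ^ γc) (invPeZero κ γi p) = 2 * p := by
  have h := Pe_zero_invPeZero (γc := γc) hκ hγi hp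
  have hsing : 0 < (invPeZero κ γi p - 1) ^ γc := Real.rpow_pos_of_pos (by linarith) _
  rw [Pe, zero_mul, add_zero] at h
  rw [Pe, h, mul_assoc, Real.rpow_neg (by linarith), mul_inv_cancel₀ hsing.ne']
  ring

/-- Since `-𝒫_ε'` is bounded below on `[τ₁, τ₂]`, `g` is Lipschitz on `[q₁, q₂]`, which is the
continuity the inverse function rule needs. -/
lemma hasDerivAt_of_Pe_rightInverse {g : ℝ → ℝ} {ε q₁ q₂ τ₁ τ₂ p : ℝ} (hκ : 0 < κ)
    (hγi : 0 < γi) (hγc : 0 ≤ γc) (hε : 0 ≤ ε) (hτ₁ : 1 < τ₁)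
    (hg : ∀ y ∈ Icc q₁ q₂, Pe κ γi γc ε (g y) = y) (hgmaps : MapsTo g (Icc q₁ q₂) (Icc τ₁ τ₂))
    (hp : p ∈ Ioo q₁ q₂) :
    HasDerivAt g (-negDerivPe κ γi γc ε (g p))⁻¹ p := by
  have hnhds : Icc q₁ q₂ ∈ 𝓝 p := Icc_mem_nhds hp.1 hp.2
  have hgp := hgmaps (Ioo_subset_Icc_self hp)
  have hτ₂ : 1 < τ₂ := hτ₁.trans_le (hgp.1.trans hgp.2)
  have one_lt : ∀ τ ∈ Icc τ₁ τ₂, 1 < τ := fun τ hτ => hτ₁.trans_le hτ.1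
  have hlip := lipschitzOnWith_of_rightInverse (negDerivPe_pos hκ hγi hγc hε hτ₂)
    (convex_Icc τ₁ τ₂)
    (fun τ hτ => (hasDerivAt_Pe ε (one_lt τ hτ)).continuousAt.continuousWithinAt)
    (fun τ hτ => (hasDerivAt_Pe ε (one_lt τ (interior_subset hτ))).differentiableAt
      |>.differentiableWithinAt)
    (fun τ hτ => by
      have hτ' := interior_subset hτ
      rw [(hasDerivAt_Pe ε (one_lt τ hτ')).deriv, neg_le_neg_iff]
      exact negDerivPe_antitoneOn hκ.le hγi.le hγc hε (one_lt τ hτ') hτ₂ hτ'.2)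
    hgmaps hg
  exact HasDerivAt.of_local_left_inverse (hlip.continuousOn.continuousAt hnhds)
    (hasDerivAt_Pe ε (one_lt _ hgp))
    (neg_ne_zero.2 (negDerivPe_pos hκ hγi hγc hε (one_lt _ hgp)).ne')
    (eventually_of_mem hnhds hg)

lemma neg_deriv_mem_Icc_of_Pe_rightInverse {g : ℝ → ℝ} {ε ε₀ q₁ q₂ τ₁ τ₂ p : ℝ} (hκ : 0 < κ)
    (hγi : 0 < γi) (hγc : 0 ≤ γc) (hε : 0 ≤ ε) (hεε₀ : ε ≤ ε₀) (hτ₁ : 1 < τ₁)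
    (hg : ∀ y ∈ Icc q₁ q₂, Pe κ γi γc ε (g y) = y) (hgmaps : MapsTo g (Icc q₁ q₂) (Icc τ₁ τ₂))
    (hp : p ∈ Ioo q₁ q₂) :
    -deriv g p ∈ Icc (negDerivPe κ γi γc ε₀ τ₁)⁻¹ (negDerivPe κ γi γc 0 τ₂)⁻¹ := by
  have hgp := hgmaps (Ioo_subset_Icc_self hp)
  obtain ⟨hlow, hhigh⟩ := negDerivPe_mem_Icc hκ.le hγi.le hγc hε hεε₀ hτ₁ hgp
  have hτ₂ : 1 < τ₂ := hτ₁.trans_le (hgp.1.trans hgp.2)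
  rw [(hasDerivAt_of_Pe_rightInverse hκ hγi hγc hε hτ₁ hg hgmaps hp).deriv, inv_neg, neg_neg]
  exact ⟨inv_anti₀ (negDerivPe_pos hκ hγi hγc hε (hτ₁.trans_le hgp.1)) hhigh,
    inv_anti₀ (negDerivPe_pos hκ hγi hγc le_rfl hτ₂) hlow⟩

end PressureLaw

/-- On a free-pressure interval `[𝔭_f⁻, 𝔭_f⁺] ⊂ (0,κ)`, the derivative of `𝒯_ε` satisfies
uniform two-sided bounds `C₁ ≤ -𝒯_ε'(p) ≤ C₂` independent of `ε` small. -/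
theorem stmt5 (κ γi γc pf1 pf2 : ℝ) (hκ : 0 < κ) (hγi : 1 < γi) (hγc : 1 < γc)
    (hpf1 : 0 < pf1) (hpf12 : pf1 < pf2) (hpf2 : pf2 < κ)
    (T : ℝ → ℝ → ℝ)
    (hT : ∀ ε > (0:ℝ), ∀ p > (0:ℝ), 1 < T ε p ∧ Pe κ γi γc ε (T ε p) = p) :
    ∃ C₁ C₂ εb : ℝ, 0 < C₁ ∧ C₁ ≤ C₂ ∧ 0 < εb ∧
      ∀ ε, 0 < ε → ε < εb → ∀ p ∈ Icc pf1 pf2,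
        C₁ ≤ -deriv (T ε) p ∧ -deriv (T ε) p ≤ C₂ := by
  have hγi0 : 0 < γi := by linarith
  have hγc0 : 0 ≤ γc := by linarith
  obtain ⟨q₁, hq₁, hq₁pf1⟩ := exists_between hpf1
  obtain ⟨q₂, hpf2q₂, hq₂κ⟩ := exists_between hpf2
  set τ₁ := invPeZero κ γi q₂
  set τ₂ := invPeZero κ γi (q₁ / 2)
  have hτ₁ : 1 < τ₁ := one_lt_invPeZero hγi0 (by linarith) hq₂κ
  have hτ₂ : 1 < τ₂ := one_lt_invPeZero hγi0 (by positivity) (by linarith)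
  set εb := q₁ / 2 * (τ₂ - 1) ^ γc
  have hεb : 0 < εb := mul_pos (by positivity) (Real.rpow_pos_of_pos (by linarith) _)
  have hbox : ∀ ε, 0 < ε → ε < εb → MapsTo (T ε) (Icc q₁ q₂) (Icc τ₁ τ₂) := by
    intro ε hε hεεb p hp
    obtain ⟨hTp, hPeT⟩ := hT ε hε p (by linarith [hp.1])
    refine mem_Icc_of_Pe_le hκ hγi0 hγc0 hε.le hεεb.le hτ₁ hτ₂ hTp ?_ ?_
    · rw [hPeT, Pe_invPeZero_eq_two_mul hκ hγi0.ne' (by positivity) hτ₂]; linarith [hp.1]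
    · rw [hPeT, Pe_zero_invPeZero hκ hγi0.ne' (by linarith)]; exact hp.2
  have hbounds : ∀ ε, 0 < ε → ε < εb → ∀ p ∈ Icc pf1 pf2,
      -deriv (T ε) p ∈ Icc (negDerivPe κ γi γc εb τ₁)⁻¹ (negDerivPe κ γi γc 0 τ₂)⁻¹ :=
    fun ε hε hεεb p hp => neg_deriv_mem_Icc_of_Pe_rightInverse hκ hγi0 hγc0 hε.le hεεb.le hτ₁
      (fun y hy => (hT ε hε y (by linarith [hy.1])).2) (hbox ε hε hεεb)
      ⟨by linarith [hp.1], by linarith [hp.2]⟩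
  refine ⟨_, _, εb, inv_pos.2 (negDerivPe_pos hκ hγi0 hγc0 hεb.le hτ₁), ?_, hεb, hbounds⟩
  obtain ⟨h₁, h₂⟩ := hbounds (εb / 2) (by positivity) (by linarith) pf1 ⟨le_rfl, hpf12.le⟩
  exact h₁.trans h₂
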